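/- arXiv:2403.11012 — 2 statements merged into one kernel-verified Lean document; each statement's English description precedes it below -/
import Mathlib

section
/- Let π be an admissible switching process and let r be a white noise w.r.t. π. Then r is a white noise process in the classical sense: E[r(t)r(s)ᵀ] = 0 for all t,s ∈ ℤ with t ≠ s. -/
open MeasureTheory
open scoped Classical Matrix Kronecker

namespace GLSS

variable {Ω : Type*} [MeasurableSpace Ω]

/-- `piW π w t` is the product `π_{σ₁}(t-k+1)⋯π_{σ_k}(t)` for the word `w = σ₁⋯σ_k`
(and `1` for the empty word). -/
noncomputable def piW {Λ : Type*} (π : ℤ → Ω → Λ → ℝ) (w : List Λ) (t : ℤ) (ω : Ω) : ℝ :=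
  ∏ i : Fin w.length, π (t - (w.length : ℤ) + 1 + ((i : ℕ) : ℤ)) ω (w.get i)

/-- `p_w = p_{σ₁}⋯p_{σ_k}`. -/
noncomputable def pW {Λ : Type*} (p : Λ → ℝ) (w : List Λ) : ℝ := (w.map p).prod

/-- `z^r_w(t) = r(t-|w|) π_w(t-1) / √(p_w)`.  For `w = []` this is `r(t)` itself. -/
noncomputable def zW {Λ : Type*} {mι : Type*} (π : ℤ → Ω → Λ → ℝ) (p : Λ → ℝ)
    (r : ℤ → Ω → mι → ℝ) (w : List Λ) (t : ℤ) (ω : Ω) : mι → ℝ :=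
  fun i => r (t - (w.length : ℤ)) ω i * piW π w (t - 1) ω / Real.sqrt (pW p w)

/-- A word is admissible w.r.t. the edge set `E` if all pairs of consecutive letters lie in
`E`; the set of such (nonempty) words is the set `L` of admissible words. -/
def chainIn {Λ : Type*} (E : Set (Λ × Λ)) (w : List Λ) : Prop :=
  w.Chain' (fun a b => (a, b) ∈ E)

/-- The σ-algebra `F^{π,-}_t` generated by `{π(k)}_{k<t}`. -/
def sigmaPast {Λ : Type*} (π : ℤ → Ω → Λ → ℝ) (t : ℤ) : MeasurableSpace Ω :=
  ⨆ (k : ℤ) (_ : k < t), MeasurableSpace.comap (π k) inferInstance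

/-- The σ-algebra `F^{π,+}_t` generated by `{π(k)}_{k≥t}`. -/
def sigmaFuture {Λ : Type*} (π : ℤ → Ω → Λ → ℝ) (t : ℤ) : MeasurableSpace Ω :=
  ⨆ (k : ℤ) (_ : t ≤ k), MeasurableSpace.comap (π k) inferInstance

/-- The σ-algebra `F^r_t` generated by `{r(k)}_{k≤t}`. -/
def sigmaUpTo {β : Type*} [MeasurableSpace β] (r : ℤ → Ω → β) (t : ℤ) : MeasurableSpace Ω :=
  ⨆ (k : ℤ) (_ : k ≤ t), MeasurableSpace.comap (r k) inferInstance

/-- Conditional independence of the σ-algebras `m₁` and `m₂` given `m'`. -/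
def CondIndepSigma (μ : Measure Ω) (m' m₁ m₂ : MeasurableSpace Ω) : Prop :=
  ∀ A B : Set Ω, MeasurableSet[m₁] A → MeasurableSet[m₂] B →
    μ[(A ∩ B).indicator (fun _ => (1 : ℝ)) | m'] =ᵐ[μ]
      fun ω => ((μ[A.indicator (fun _ => (1 : ℝ)) | m']) ω) *
        ((μ[B.indicator (fun _ => (1 : ℝ)) | m']) ω)

/-- Admissible switching process (Definition 1 of the paper), with edge set `E`,
constants `{p_σ}` and `{α_σ}`. -/
structure IsAdmissible {Λ : Type*} [Fintype Λ] (μ : Measure Ω) (π : ℤ → Ω → Λ → ℝ)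
    (E : Set (Λ × Λ)) (p : Λ → ℝ) (α : Λ → ℝ) : Prop where
  meas : ∀ t : ℤ, Measurable (π t)
  sqInt : ∀ (w : List Λ) (t : ℤ), MemLp (piW π w t) 2 μ
  edge_total : ∀ σ : Λ, ∃ σ' : Λ, (σ, σ') ∈ E
  zero_off : ∀ w : List Λ, w ≠ [] → ¬ chainIn E w → ∀ t ω, piW π w t ω = 0
  p_pos : ∀ σ : Λ, 0 < p σ
  cond_pair : ∀ (w v : List Λ), w ≠ [] → v ≠ [] → ∀ (σ σ' : Λ) (t : ℤ),
    μ[fun ω => piW π (w ++ [σ]) t ω * piW π (v ++ [σ']) t ω | sigmaPast π t] =ᵐ[μ]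
      (if σ = σ' ∧ chainIn E (w ++ [σ]) ∧ chainIn E (v ++ [σ]) then
        (fun ω => p σ * (piW π w (t - 1) ω * piW π v (t - 1) ω)) else 0)
  cond_single : ∀ (w : List Λ), w ≠ [] → ∀ (σ σ' : Λ) (t : ℤ),
    μ[fun ω => piW π (w ++ [σ]) t ω * piW π [σ'] t ω | sigmaPast π t] =ᵐ[μ]
      (if σ = σ' ∧ chainIn E (w ++ [σ]) then (fun ω => p σ * piW π w (t - 1) ω) else 0)
  cond_letters : ∀ (σ σ' : Λ), σ ≠ σ' → ∀ t : ℤ,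
    μ[fun ω => piW π [σ] t ω * piW π [σ'] t ω | sigmaPast π t] =ᵐ[μ] 0
  alpha_sum : ∀ (t : ℤ) (ω : Ω), ∑ σ : Λ, α σ * piW π [σ] t ω = 1
  mean_stat : ∀ (w : List Λ) (t τ : ℤ), ∫ ω, piW π w t ω ∂μ = ∫ ω, piW π w (t + τ) ω ∂μ
  cov_stat : ∀ (w v : List Λ) (t s τ : ℤ),
    ∫ ω, piW π w t ω * piW π v s ω ∂μ = ∫ ω, piW π w (t + τ) ω * piW π v (s + τ) ω ∂μ

/-- Zero-mean wide-sense stationary w.r.t. `π` (ZMWSII) process. -/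
structure IsZMWSII {Λ : Type*} [Fintype Λ] {mι : Type*} [Fintype mι]
    (μ : Measure Ω) (π : ℤ → Ω → Λ → ℝ) (p : Λ → ℝ) (r : ℤ → Ω → mι → ℝ) : Prop where
  condIndep : ∀ t : ℤ, CondIndepSigma μ (sigmaPast π t) (sigmaUpTo r t) (sigmaFuture π t)
  sqInt : ∀ (w : List Λ) (t : ℤ), MemLp (zW π p r w t) 2 μ
  zeroMean : ∀ (w : List Λ) (t : ℤ) (i : mι), ∫ ω, zW π p r w t ω i ∂μ = 0
  jointWSS : ∀ (w v : List Λ) (t s τ : ℤ) (i j : mι),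
    ∫ ω, zW π p r w t ω i * zW π p r v s ω j ∂μ
      = ∫ ω, zW π p r w (t + τ) ω i * zW π p r v (s + τ) ω j ∂μ

/-- White noise w.r.t. `π`. -/
structure IsWhiteNoise {Λ : Type*} [Fintype Λ] [DecidableEq Λ] {mι : Type*} [Fintype mι]
    [DecidableEq mι] (μ : Measure Ω) (π : ℤ → Ω → Λ → ℝ) (p : Λ → ℝ)
    (r : ℤ → Ω → mι → ℝ) : Prop extends IsZMWSII μ π p r where
  orth : ∀ (w : List Λ), w ≠ [] → ∀ (σ : Λ) (v : List Λ) (t : ℤ) (i j : mι),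
    ∫ ω, zW π p r w t ω i * zW π p r (σ :: v) t ω j ∂μ =
      if w = σ :: v then ∫ ω, zW π p r [σ] t ω i * zW π p r [σ] t ω j ∂μ else 0
  nonsing : ∀ (σ : Λ) (t : ℤ),
    IsUnit (Matrix.of fun i j : mι => ∫ ω, zW π p r [σ] t ω i * zW π p r [σ] t ω j ∂μ)

/-- `A_w = A_{σ_k} ⋯ A_{σ₁}` for `w = σ₁⋯σ_k` (`A_ε = I`). -/
noncomputable def Aword {Λ : Type*} {ι : Type*} [Fintype ι] [DecidableEq ι]
    (A : Λ → Matrix ι ι ℝ) (w : List Λ) : Matrix ι ι ℝ :=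
  w.foldl (fun M σ => A σ * M) 1

/-- Stationary generalized linear switched system (sGLSS) of `(y, u, π)`, with matrices
`({A_σ, K_σ, B_σ}, C, D, F)`, state process `x` and noise process `v`. -/
structure IsSGLSS {Λ : Type*} [Fintype Λ] [DecidableEq Λ]
    {ι υ ν γ : Type*} [Fintype ι] [DecidableEq ι] [Fintype υ] [DecidableEq υ]
    [Fintype ν] [DecidableEq ν] [Fintype γ] [DecidableEq γ]
    (μ : Measure Ω) (π : ℤ → Ω → Λ → ℝ) (E : Set (Λ × Λ)) (p : Λ → ℝ)
    (A : Λ → Matrix ι ι ℝ) (K : Λ → Matrix ι ν ℝ) (B : Λ → Matrix ι υ ℝ)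
    (C : Matrix γ ι ℝ) (D : Matrix γ υ ℝ) (F : Matrix γ ν ℝ)
    (x : ℤ → Ω → ι → ℝ) (v : ℤ → Ω → ν → ℝ) (u : ℤ → Ω → υ → ℝ)
    (y : ℤ → Ω → γ → ℝ) : Prop where
  state_eq : ∀ t : ℤ, ∀ᵐ ω ∂μ,
    x (t + 1) ω = ∑ σ : Λ, π t ω σ • (A σ *ᵥ x t ω + B σ *ᵥ u t ω + K σ *ᵥ v t ω)
  output_eq : ∀ t : ℤ, ∀ᵐ ω ∂μ, y t ω = C *ᵥ x t ω + D *ᵥ u t ω + F *ᵥ v t ω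
  noise_white : IsWhiteNoise μ π p (fun t ω => Sum.elim (v t ω) (u t ω))
  joint_zmwsii : IsZMWSII μ π p (fun t ω => Sum.elim (x t ω) (Sum.elim (v t ω) (u t ω)))
  state_noise_orth : ∀ (σ : Λ) (t : ℤ) (i : ι) (j : ν ⊕ υ),
    ∫ ω, zW π p x [σ] t ω i *
      zW π p (fun t ω => Sum.elim (v t ω) (u t ω)) [σ] t ω j ∂μ = 0
  state_noise_orth' : ∀ (s : List Λ), s ≠ [] → ∀ (t : ℤ) (i : ι) (j : ν ⊕ υ),
    ∫ ω, x t ω i * zW π p (fun t ω => Sum.elim (v t ω) (u t ω)) s t ω j ∂μ = 0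
  stable : ∀ z ∈ spectrum ℂ
      ((∑ σ : Λ, p σ • Matrix.kroneckerMap (· * ·) (A σ) (A σ)).map (algebraMap ℝ ℂ)),
    ‖z‖ < 1
  off_edge : ∀ σ₁ σ₂ : Λ, (σ₁, σ₂) ∉ E →
    A σ₂ * A σ₁ = 0 ∧ ∀ t : ℤ,
      A σ₂ * Matrix.fromCols (K σ₁) (B σ₁) *
        Matrix.of (fun i j : ν ⊕ υ =>
          ∫ ω, zW π p (fun t ω => Sum.elim (v t ω) (u t ω)) [σ₁] t ω i *
            zW π p (fun t ω => Sum.elim (v t ω) (u t ω)) [σ₁] t ω j ∂μ) = 0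

/-- Autonomous stationary generalized linear switched system (asGLSS) of `(y, π)`, with
matrices `({A_σ, K_σ}, C, F)`, state process `x` and noise process `v`. -/
structure IsASGLSS {Λ : Type*} [Fintype Λ] [DecidableEq Λ]
    {ι ν γ : Type*} [Fintype ι] [DecidableEq ι] [Fintype ν] [DecidableEq ν]
    [Fintype γ] [DecidableEq γ]
    (μ : Measure Ω) (π : ℤ → Ω → Λ → ℝ) (E : Set (Λ × Λ)) (p : Λ → ℝ)
    (A : Λ → Matrix ι ι ℝ) (K : Λ → Matrix ι ν ℝ)
    (C : Matrix γ ι ℝ) (F : Matrix γ ν ℝ)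
    (x : ℤ → Ω → ι → ℝ) (v : ℤ → Ω → ν → ℝ) (y : ℤ → Ω → γ → ℝ) : Prop where
  state_eq : ∀ t : ℤ, ∀ᵐ ω ∂μ,
    x (t + 1) ω = ∑ σ : Λ, π t ω σ • (A σ *ᵥ x t ω + K σ *ᵥ v t ω)
  output_eq : ∀ t : ℤ, ∀ᵐ ω ∂μ, y t ω = C *ᵥ x t ω + F *ᵥ v t ω
  noise_white : IsWhiteNoise μ π p v
  joint_zmwsii : IsZMWSII μ π p (fun t ω => Sum.elim (x t ω) (v t ω))
  state_noise_orth : ∀ (σ : Λ) (t : ℤ) (i : ι) (j : ν),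
    ∫ ω, zW π p x [σ] t ω i * zW π p v [σ] t ω j ∂μ = 0
  state_noise_orth' : ∀ (s : List Λ), s ≠ [] → ∀ (t : ℤ) (i : ι) (j : ν),
    ∫ ω, x t ω i * zW π p v s t ω j ∂μ = 0
  stable : ∀ z ∈ spectrum ℂ
      ((∑ σ : Λ, p σ • Matrix.kroneckerMap (· * ·) (A σ) (A σ)).map (algebraMap ℝ ℂ)),
    ‖z‖ < 1
  off_edge : ∀ σ₁ σ₂ : Λ, (σ₁, σ₂) ∉ E →
    A σ₂ * A σ₁ = 0 ∧ ∀ t : ℤ,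
      A σ₂ * K σ₁ *
        Matrix.of (fun i j : ν => ∫ ω, zW π p v [σ₁] t ω i * zW π p v [σ₁] t ω j ∂μ) = 0

/-- `f` belongs to the closed subspace of `L²(μ)` generated by the set `S`:
it is an `L²`-limit of finite linear combinations of elements of `S`. -/
def memL2Span (μ : Measure Ω) (S : Set (Ω → ℝ)) (f : Ω → ℝ) : Prop :=
  ∀ ε : ℝ, 0 < ε → ∃ g ∈ Submodule.span ℝ S, eLpNorm (f - g) 2 μ < ENNReal.ofReal ε

/-- `f` is orthogonal in `L²(μ)` to the closed subspace generated by `S`. -/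
def orthToSpan (μ : Measure Ω) (S : Set (Ω → ℝ)) (f : Ω → ℝ) : Prop :=
  ∀ g : Ω → ℝ, MemLp g 2 μ → memL2Span μ S g → ∫ ω, f ω * g ω ∂μ = 0

/-- `g = E_l[f ∣ S]`: the orthogonal projection of `f` onto the closed linear span of `S`
in `L²(μ)`, characterized by `g` lying in the closed span and `f - g` being orthogonal to
every generator. -/
def IsLinearProj (μ : Measure Ω) (S : Set (Ω → ℝ)) (f g : Ω → ℝ) : Prop :=
  MemLp g 2 μ ∧ memL2Span μ S g ∧ ∀ h ∈ S, ∫ ω, (f ω - g ω) * h ω ∂μ = 0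

/-- The components of `{z^r_w(t)}_{w ∈ Σ⁺}` (generators of `H^r_t`). -/
def pastSpan {Λ : Type*} {mι : Type*} (π : ℤ → Ω → Λ → ℝ) (p : Λ → ℝ)
    (r : ℤ → Ω → mι → ℝ) (t : ℤ) : Set (Ω → ℝ) :=
  {f | ∃ (w : List Λ) (i : mι), w ≠ [] ∧ f = fun ω => zW π p r w t ω i}

/-- The components of `{z^r_w(t)}_{w ∈ Σ⁺} ∪ {r(t)}` (generators of `H^r_{t,+}`). -/
def pastPlusSpan {Λ : Type*} {mι : Type*} (π : ℤ → Ω → Λ → ℝ) (p : Λ → ℝ)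
    (r : ℤ → Ω → mι → ℝ) (t : ℤ) : Set (Ω → ℝ) :=
  {f | ∃ (w : List Λ) (i : mι), f = fun ω => zW π p r w t ω i}

/-- Unconditional convergence of the series `∑ f a` to `g` in the mean-square sense. -/
def HasSumL2 {κ : Type*} (μ : Measure Ω) (f : κ → Ω → ℝ) (g : Ω → ℝ) : Prop :=
  ∀ ε : ℝ, 0 < ε → ∃ s : Finset κ, ∀ T : Finset κ, s ⊆ T →
    eLpNorm (fun ω => (∑ a ∈ T, f a ω) - g ω) 2 μ < ENNReal.ofReal ε

section Auxx

variable {Λ : Type*} [Fintype Λ]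

lemma piW_nil' (π : ℤ → Ω → Λ → ℝ) (t : ℤ) (ω : Ω) : piW π [] t ω = 1 := by
  simp [piW]

lemma piW_single' (π : ℤ → Ω → Λ → ℝ) (σ : Λ) (t : ℤ) (ω : Ω) :
    piW π [σ] t ω = π t ω σ := by
  simp [piW]

lemma piW_cons' (π : ℤ → Ω → Λ → ℝ) (σ : Λ) (w : List Λ) (t : ℤ) (ω : Ω) :
    piW π (σ :: w) t ω = π (t - w.length) ω σ * piW π w t ω := by
  unfold piW
  simp only [List.length_cons, Fin.prod_univ_succ, Fin.val_zero, Fin.val_succ,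
    List.get_cons_zero, List.get_cons_succ]
  push_cast
  ring_nf
  try congr 1
  try exact Finset.prod_congr rfl fun x _ => by congr 1

lemma sum_alpha_piW (π : ℤ → Ω → Λ → ℝ) (α : Λ → ℝ)
    (hα : ∀ (t : ℤ) (ω : Ω), ∑ σ : Λ, α σ * piW π [σ] t ω = 1) :
    ∀ (k : ℕ) (t : ℤ) (ω : Ω),
      ∑ wf : Fin k → Λ, (∏ m, α (wf m)) * piW π (List.ofFn wf) t ω = 1 := by
  intro k
  induction k with
  | zero =>
    intro t ω
    rw [Fintype.sum_unique]
    rw [show (default : Fin 0 → Λ) = (default : Fin 0 → Λ) from rfl, List.ofFn_zero, piW_nil']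
    simp
  | succ k ih =>
    intro t ω
    have h1 := hα (t - k) ω
    calc ∑ wf : Fin (k+1) → Λ, (∏ m, α (wf m)) * piW π (List.ofFn wf) t ω
        = ∑ q : Λ × (Fin k → Λ), (∏ m, α ((Fin.cons q.1 q.2 : Fin (k+1) → Λ) m)) *
            piW π (List.ofFn (Fin.cons q.1 q.2 : Fin (k+1) → Λ)) t ω := by
          refine Fintype.sum_equiv
            ⟨fun f : Fin (k+1) → Λ => (f 0, fun i => f i.succ),
             fun q => Fin.cons q.1 q.2,
             fun f => by funext m; exact Fin.cases rfl (fun i => by simp) m,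
             fun q => by simp⟩ _ _ ?_
          intro f
          have hf : (Fin.cons (f 0) (fun i => f i.succ) : Fin (k+1) → Λ) = f := by
            funext m
            exact Fin.cases rfl (fun i => by simp) m
          simp only [Equiv.coe_fn_mk]
          rw [hf]
      _ = ∑ a : Λ, ∑ g : Fin k → Λ, (α a * π (t - k) ω a) *
            ((∏ m, α (g m)) * piW π (List.ofFn g) t ω) := by
          rw [Fintype.sum_prod_type]
          refine Finset.sum_congr rfl fun a _ => Finset.sum_congr rfl fun g _ => ?_
          rw [Fin.prod_univ_succ]
          simp only [Fin.cons_zero, Fin.cons_succ]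
          rw [List.ofFn_succ]
          simp only [Fin.cons_zero, Fin.cons_succ]
          rw [piW_cons']
          rw [List.length_ofFn]
          ring
      _ = (∑ a : Λ, α a * π (t - k) ω a) *
            (∑ g : Fin k → Λ, (∏ m, α (g m)) * piW π (List.ofFn g) t ω) := by
          rw [Finset.sum_mul_sum]
      _ = 1 := by
          rw [ih]
          have h2 : ∑ a : Λ, α a * π (t - k) ω a = 1 := by
            rw [← h1]
            exact Finset.sum_congr rfl fun a _ => by rw [piW_single']
          rw [h2, mul_one]

lemma pW_pos (p : Λ → ℝ) (hp : ∀ σ : Λ, 0 < p σ) (w : List Λ) : 0 < pW p w := by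
  unfold pW
  apply List.prod_pos
  intro a ha
  rcases List.mem_map.mp ha with ⟨σ, _, rfl⟩
  exact hp σ

lemma r_expand {mι : Type*} (π : ℤ → Ω → Λ → ℝ) (p : Λ → ℝ) (hp : ∀ σ : Λ, 0 < p σ)
    (α : Λ → ℝ) (hα : ∀ (t : ℤ) (ω : Ω), ∑ σ : Λ, α σ * piW π [σ] t ω = 1)
    (r : ℤ → Ω → mι → ℝ) (k : ℕ) (t : ℤ) (ω : Ω) (i : mι) :
    r t ω i = ∑ wf : Fin k → Λ,
      ((∏ m, α (wf m)) * Real.sqrt (pW p (List.ofFn wf))) *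
        zW π p r (List.ofFn wf) (t + k) ω i := by
  have key : ∀ wf : Fin k → Λ,
      ((∏ m, α (wf m)) * Real.sqrt (pW p (List.ofFn wf))) *
          zW π p r (List.ofFn wf) (t + k) ω i
        = (∏ m, α (wf m)) * piW π (List.ofFn wf) (t + k - 1) ω * r t ω i := by
    intro wf
    have hpw := pW_pos p hp (List.ofFn wf)
    have hsq : Real.sqrt (pW p (List.ofFn wf)) ≠ 0 :=
      ne_of_gt (Real.sqrt_pos.mpr hpw)
    unfold zW
    rw [List.length_ofFn]
    have ht : t + (k : ℤ) - (k : ℤ) = t := by ring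
    rw [ht]
    field_simp
  rw [Finset.sum_congr rfl fun wf _ => key wf]
  have : ∑ wf : Fin k → Λ, (∏ m, α (wf m)) * piW π (List.ofFn wf) (t + k - 1) ω * r t ω i
      = (∑ wf : Fin k → Λ, (∏ m, α (wf m)) * piW π (List.ofFn wf) (t + k - 1) ω) * r t ω i := by
    rw [Finset.sum_mul]
  rw [this, sum_alpha_piW π α hα k (t + k - 1) ω, one_mul]

lemma zW_comp_memℒp {Λ : Type*} [Fintype Λ] {mι : Type*} [Fintype mι]
    (μ : Measure Ω) (π : ℤ → Ω → Λ → ℝ) (p : Λ → ℝ) (r : ℤ → Ω → mι → ℝ)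
    (w : List Λ) (t : ℤ) (h : MemLp (zW π p r w t) 2 μ) (i : mι) :
    MemLp (fun ω => zW π p r w t ω i) 2 μ :=
  (ContinuousLinearMap.proj (R := ℝ) (φ := fun _ : mι => ℝ) i).comp_memLp' h

lemma orth_zero {Λ : Type*} [Fintype Λ] [DecidableEq Λ] {mι : Type*} [Fintype mι]
    [DecidableEq mι] (μ : Measure Ω) (π : ℤ → Ω → Λ → ℝ) (p : Λ → ℝ)
    (r : ℤ → Ω → mι → ℝ) (hr : IsWhiteNoise μ π p r)
    {w v : List Λ} (hw : w ≠ []) (hv : v ≠ []) (hlen : w.length ≠ v.length)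
    (t : ℤ) (i j : mι) :
    ∫ ω, zW π p r w t ω i * zW π p r v t ω j ∂μ = 0 := by
  obtain ⟨σ, v', rfl⟩ := List.exists_cons_of_ne_nil hv
  rw [hr.orth w hw σ v' t i j, if_neg]
  intro h
  exact hlen (by rw [h])

lemma integral_rr_zero {Λ : Type*} [Fintype Λ] [DecidableEq Λ]
    {mι : Type*} [Fintype mι] [DecidableEq mι]
    (μ : Measure Ω) (π : ℤ → Ω → Λ → ℝ) (p α : Λ → ℝ)
    (hp : ∀ σ : Λ, 0 < p σ)
    (hα : ∀ (t : ℤ) (ω : Ω), ∑ σ : Λ, α σ * piW π [σ] t ω = 1)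
    (r : ℤ → Ω → mι → ℝ) (hr : IsWhiteNoise μ π p r)
    (t s : ℤ) (k l : ℕ) (hk : k ≠ 0) (hl : l ≠ 0) (hkl : k ≠ l)
    (hT : t + (k : ℤ) = s + (l : ℤ)) (i j : mι) :
    ∫ ω, r t ω i * r s ω j ∂μ = 0 := by
  set c : (Fin k → Λ) → ℝ := fun wf => (∏ m, α (wf m)) * Real.sqrt (pW p (List.ofFn wf))
  set d : (Fin l → Λ) → ℝ := fun vf => (∏ m, α (vf m)) * Real.sqrt (pW p (List.ofFn vf))
  have hpt : ∀ ω, r t ω i * r s ω j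
      = ∑ q : (Fin k → Λ) × (Fin l → Λ),
          (c q.1 * d q.2) * (zW π p r (List.ofFn q.1) (t + k) ω i *
            zW π p r (List.ofFn q.2) (t + k) ω j) := by
    intro ω
    rw [r_expand π p hp α hα r k t ω i]
    have hs : r s ω j = ∑ vf : Fin l → Λ,
        d vf * zW π p r (List.ofFn vf) (t + k) ω j := by
      rw [hT]
      exact r_expand π p hp α hα r l s ω j
    rw [hs, Finset.sum_mul_sum, Fintype.sum_prod_type]
    exact Finset.sum_congr rfl fun wf _ => Finset.sum_congr rfl fun vf _ => by ring
  have hint : ∀ q : (Fin k → Λ) × (Fin l → Λ),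
      Integrable (fun ω => (c q.1 * d q.2) * (zW π p r (List.ofFn q.1) (t + k) ω i *
        zW π p r (List.ofFn q.2) (t + k) ω j)) μ := by
    intro q
    have h1 : MemLp (fun ω => zW π p r (List.ofFn q.1) (t + k) ω i) 2 μ :=
      zW_comp_memℒp μ π p r _ _ (hr.sqInt (List.ofFn q.1) (t + k)) i
    have h2 : MemLp (fun ω => zW π p r (List.ofFn q.2) (t + k) ω j) 2 μ :=
      zW_comp_memℒp μ π p r _ _ (hr.sqInt (List.ofFn q.2) (t + k)) j
    have hmul : MemLp (fun ω => zW π p r (List.ofFn q.1) (t + k) ω i *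
        zW π p r (List.ofFn q.2) (t + k) ω j) 1 μ := by
      have := h2.smul (φ := fun ω => zW π p r (List.ofFn q.1) (t + k) ω i) h1
        (r := 1)
      exact this
    exact (memLp_one_iff_integrable.mp hmul).const_mul _
  calc ∫ ω, r t ω i * r s ω j ∂μ
      = ∫ ω, ∑ q : (Fin k → Λ) × (Fin l → Λ),
          (c q.1 * d q.2) * (zW π p r (List.ofFn q.1) (t + k) ω i *
            zW π p r (List.ofFn q.2) (t + k) ω j) ∂μ := by
        exact integral_congr_ae (Filter.Eventually.of_forall hpt)
    _ = ∑ q : (Fin k → Λ) × (Fin l → Λ), ∫ ω,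
          (c q.1 * d q.2) * (zW π p r (List.ofFn q.1) (t + k) ω i *
            zW π p r (List.ofFn q.2) (t + k) ω j) ∂μ := by
        exact integral_finset_sum _ fun q _ => hint q
    _ = 0 := by
        apply Finset.sum_eq_zero
        intro q _
        rw [MeasureTheory.integral_const_mul]
        rw [orth_zero μ π p r hr (by simp [List.ofFn_eq_nil_iff, hk])
          (by simp [List.ofFn_eq_nil_iff, hl]) (by simp [hkl]) (t + k) i j]
        ring

end Auxx

/-- A white noise w.r.t. `π` is a white noise in the classical sense:
`E[r(t) r(s)ᵀ] = 0` for `t ≠ s`. -/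
theorem stmt12
    {Ω : Type*} [MeasurableSpace Ω] (μ : Measure Ω) [IsProbabilityMeasure μ]
    {Λ : Type*} [Fintype Λ] [DecidableEq Λ]
    {mι : Type*} [Fintype mι] [DecidableEq mι]
    (π : ℤ → Ω → Λ → ℝ) (E : Set (Λ × Λ)) (p α : Λ → ℝ)
    (hadm : IsAdmissible μ π E p α)
    (r : ℤ → Ω → mι → ℝ) (hr : IsWhiteNoise μ π p r) :
    ∀ (t s : ℤ), t ≠ s → ∀ i j : mι, ∫ ω, r t ω i * r s ω j ∂μ = 0 := by
  intro t s hts i j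
  rcases lt_or_gt_of_ne hts with h | h
  · -- t < s : expand r t at depth k = s - t + 1, r s at depth 1
    have hk0 : (0:ℤ) ≤ s - t + 1 := by omega
    refine integral_rr_zero μ π p α hadm.p_pos hadm.alpha_sum r hr t s
      (s - t + 1).toNat 1 ?_ one_ne_zero ?_ ?_ i j
    · intro hc
      have := Int.toNat_of_nonneg hk0
      omega
    · intro hc
      have := Int.toNat_of_nonneg hk0
      omega
    · have := Int.toNat_of_nonneg hk0
      push_cast [this]
      omega
  · -- s < t : expand r t at depth 1, r s at depth t - s + 1
    have hl0 : (0:ℤ) ≤ t - s + 1 := by omega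
    refine integral_rr_zero μ π p α hadm.p_pos hadm.alpha_sum r hr t s
      1 (t - s + 1).toNat one_ne_zero ?_ ?_ ?_ i j
    · intro hc
      have := Int.toNat_of_nonneg hl0
      omega
    · intro hc
      have := Int.toNat_of_nonneg hl0
      omega
    · have := Int.toNat_of_nonneg hl0
      push_cast [this]
      omega

end GLSS
end

section
/- Let T ∈ ℝ^{n×n} be invertible, K, K̂ ∈ ℝ^{n×m} with TK = K̂, and B, B̂ ∈ ℝ^{n×k}. If the column space of the stacked matrix [Bᵀ B̂ᵀ]ᵀ ∈ ℝ^{2n×k} is contained in the column space of the stacked matrix [Kᵀ K̂ᵀ]ᵀ ∈ ℝ^{2n×m}, then TB = B̂. -/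
open MeasureTheory
open scoped Classical Matrix Kronecker

namespace GLSS

variable {Ω : Type*} [MeasurableSpace Ω]

/-- key linear-algebra step in the isomorphism result, Corollary 3.
If `T` is invertible, `T K = K̂`, and the column space of `[Bᵀ B̂ᵀ]ᵀ` is contained in the
column space of `[Kᵀ K̂ᵀ]ᵀ`, then `T B = B̂`. -/
theorem stmt17 {n m k : ℕ}
    (T : Matrix (Fin n) (Fin n) ℝ) (hT : IsUnit T)
    (K Kh : Matrix (Fin n) (Fin m) ℝ) (hK : T * K = Kh)
    (B Bh : Matrix (Fin n) (Fin k) ℝ)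
    (hrange : LinearMap.range (Matrix.mulVecLin (Matrix.fromRows B Bh)) ≤
      LinearMap.range (Matrix.mulVecLin (Matrix.fromRows K Kh))) :
    T * B = Bh := by
  ext i j
  obtain ⟨x, hx⟩ := hrange (LinearMap.mem_range_self _ (Pi.single j 1))
  simp only [Matrix.mulVecLin_apply, Matrix.fromRows_mulVec] at hx
  have h1 : K *ᵥ x = B *ᵥ Pi.single j 1 := funext fun i => congrFun hx (Sum.inl i)
  have h2 : Kh *ᵥ x = Bh *ᵥ Pi.single j 1 := funext fun i => congrFun hx (Sum.inr i)
  have key : T *ᵥ (B *ᵥ Pi.single j 1) = Bh *ᵥ Pi.single j 1 := by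
    rw [← h1, ← h2, ← hK, ← Matrix.mulVec_mulVec]
  have := congrFun key i
  simpa [Matrix.mulVec_single, Matrix.mul_apply, Matrix.mulVec, dotProduct, Pi.single_apply, Finset.mul_sum, mul_ite, mul_one, mul_zero] using this

end GLSS
end
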